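/- For the local trivialization C_ψ of E = (PM × G)/T over U, defined via C_ψ(u,g) := {ψ̃[u], g}, the map C_ψ⁻¹{p,g} = (p(1), H(p⁻¹∘ψ̃[p(1)])·g) is a two-sided inverse: C_ψ⁻¹(C_ψ(u,g)) = (u,g) and C_ψ(C_ψ⁻¹{p,g}) = {p,g} for p(1) ∈ U. -/
import Mathlib


/-- For the local trivialization `C_ψ(u,g) := {ψ̃[u], g}` of
`E = (PM × G)/T` over `U`, the map `C_ψ⁻¹{p,g} = (p(1), H(p⁻¹∘ψ̃[p(1)])·g)`
is a two-sided inverse: `C_ψ⁻¹(C_ψ(u,g)) = (u,g)` and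
`C_ψ(C_ψ⁻¹{p,g}) = {p,g}`. Here `e1 p = p(1)`, `loopOf p p' = p⁻¹∘p'`,
`ψ̃[u](1) = u`, and `ψ̃[u]⁻¹∘ψ̃[u]` is thin so `H` of it is `e`. -/
theorem trivialization_inverse {P M Ω G : Type*} [Group G]
    (e1 : P → M) (loopOf : P → P → Ω)
    (comp : Ω → Ω → Ω) (invΩ : Ω → Ω) (thin : Ω → Prop)
    (H : Ω → G)
    (hanti : ∀ α β : Ω, H (comp α β) = H β * H α)
    (hthin : ∀ τ : Ω, thin τ → H τ = 1)
    (hrefl : ∀ p : P, thin (loopOf p p))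
    (hsymm : ∀ p p' : P, e1 p = e1 p' → thin (comp (loopOf p' p) (loopOf p p')))
    (htrans : ∀ p p' p'' : P, e1 p = e1 p' → e1 p' = e1 p'' →
      thin (comp (invΩ (loopOf p p'')) (comp (loopOf p' p'') (loopOf p p'))))
    (T : P × G → P × G → Prop)
    (hT : ∀ a b : P × G, T a b ↔ e1 a.1 = e1 b.1 ∧ b.2 = H (loopOf a.1 b.1) * a.2)
    (ψ : M → P) (hψ : ∀ u : M, e1 (ψ u) = u) :
    (∀ (u : M) (g : G), (e1 (ψ u), H (loopOf (ψ u) (ψ (e1 (ψ u)))) * g) = (u, g)) ∧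
    (∀ (p : P) (g : G),
      Quot.mk T (ψ (e1 p), H (loopOf p (ψ (e1 p))) * g) = Quot.mk T (p, g)) := by
  constructor
  · intro u g
    rw [hψ u, hthin _ (hrefl (ψ u)), one_mul]
  · intro p g
    exact (Quot.sound ((hT (p, g) _).mpr ⟨(hψ (e1 p)).symm, rfl⟩)).symm
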